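/- arXiv:math/0304490 — 3 statements merged into one kernel-verified Lean document; each statement's English description precedes it below -/
import Mathlib

section
/- Let n ≥ 3 be a composite modulus and t ∈ Z_n \ {0}. The groupoid Z_n(t,t) with a * b = ta + tb (mod n) is alternative (both left and right alternative) if and only if t² ≡ t (mod n). -/
/-! Left multiplication by an idempotent `t` fixes every element of the form `t * a + t * b`,
so for idempotent `t` both alternative laws reduce to associativity of addition. Conversely the
right alternative law at `x = 1`, `y = 0` reads `t * t = t`. -/

namespace IsIdempotentElem

variable {R : Type*} [Semiring R] {t : R}

theorem mul_add_mul_self (ht : IsIdempotentElem t) (a b : R) :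
    t * (t * a + t * b) = t * a + t * b := by
  rw [mul_add, ht.mul_self_mul, ht.mul_self_mul]

theorem rightAlternative (ht : IsIdempotentElem t) (x y : R) :
    t * (t * x + t * y) + t * y = t * x + t * (t * y + t * y) := by
  rw [ht.mul_add_mul_self, ht.mul_add_mul_self, add_assoc]

theorem leftAlternative (ht : IsIdempotentElem t) (x y : R) :
    t * (t * x + t * x) + t * y = t * x + t * (t * x + t * y) := by
  rw [ht.mul_add_mul_self, ht.mul_add_mul_self, add_assoc]

theorem of_rightAlternative
    (h : ∀ x y : R, t * (t * x + t * y) + t * y = t * x + t * (t * y + t * y)) :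
    IsIdempotentElem t :=
  isIdempotentElem_iff.mpr (by simpa using h 1 0)

end IsIdempotentElem

theorem stmt7_general (n : ℕ) (t : ZMod n) :
    ((∀ x y : ZMod n,
        t * (t * x + t * y) + t * y = t * x + t * (t * y + t * y)) ∧
     (∀ x y : ZMod n,
        t * (t * x + t * x) + t * y = t * x + t * (t * x + t * y))) ↔
      t ^ 2 = t := by
  have idem_iff : IsIdempotentElem t ↔ t ^ 2 = t := by rw [IsIdempotentElem, sq]
  rw [← idem_iff]
  exact ⟨fun h => .of_rightAlternative h.1, fun ht => ⟨ht.rightAlternative, ht.leftAlternative⟩⟩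

/-- For a composite modulus n ≥ 3 and nonzero t in Z_n, the
groupoid Z_n(t,t) with a * b = t*a + t*b is alternative (both left and
right alternative) iff t² ≡ t (mod n). -/
theorem stmt7 (n : ℕ) (hn : 3 ≤ n) (hcomp : ¬ n.Prime) (t : ZMod n) (ht : t ≠ 0) :
    ((∀ x y : ZMod n,
        t * (t * x + t * y) + t * y = t * x + t * (t * y + t * y)) ∧
     (∀ x y : ZMod n,
        t * (t * x + t * x) + t * y = t * x + t * (t * x + t * y))) ↔
      t ^ 2 = t :=
  stmt7_general n t
end

section
/- Let n ≥ 3 and t, u ∈ Z_n \ {0}. The groupoid Z_n(t,u) satisfies the Bol identity ((x * y) * z) * y = x * ((y * z) * y) for all x, y, z if t³ ≡ t (mod n) and u² ≡ u (mod n). -/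
theorem bol_identity_affine_of_pow_three_of_sq {R : Type*} [CommSemiring R] {t u : R}
    (ht3 : t ^ 3 = t) (hu2 : u ^ 2 = u) (x y z : R) :
    t * (t * (t * x + u * y) + u * z) + u * y
      = t * x + u * (t * (t * y + u * z) + u * y) :=
  calc t * (t * (t * x + u * y) + u * z) + u * y
      = t ^ 3 * x + t ^ 2 * u * y + t * u * z + u * y := by ring
    _ = t * x + t ^ 2 * u * y + t * u ^ 2 * z + u ^ 2 * y := by rw [ht3, hu2]
    _ = t * x + u * (t * (t * y + u * z) + u * y) := by ring

theorem stmt12_general (n : ℕ) (t u : ZMod n)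
    (ht3 : t ^ 3 = t) (hu2 : u ^ 2 = u) :
    ∀ x y z : ZMod n,
      t * (t * (t * x + u * y) + u * z) + u * y
        = t * x + u * (t * (t * y + u * z) + u * y) :=
  bol_identity_affine_of_pow_three_of_sq ht3 hu2

/-- For n ≥ 3 and nonzero t, u in Z_n, if t³ ≡ t and u² ≡ u
(mod n) then Z_n(t,u) satisfies the Bol identity ((x*y)*z)*y = x*((y*z)*y). -/
theorem stmt12 (n : ℕ) (hn : 3 ≤ n) (t u : ZMod n) (ht : t ≠ 0) (hu : u ≠ 0)
    (ht3 : t ^ 3 = t) (hu2 : u ^ 2 = u) :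
    ∀ x y z : ZMod n,
      t * (t * (t * x + u * y) + u * z) + u * y
        = t * x + u * (t * (t * y + u * z) + u * y) :=
  stmt12_general n t u ht3 hu2
end

section
/- Let n ≥ 3 and t, u ∈ Z_n \ {0}. The groupoid Z_n(t,u) satisfies the Moufang identity (x * y) * (z * x) = (x * (y * z)) * x for all x, y, z if t² ≡ t (mod n) and u² ≡ u (mod n). -/
theorem affine_moufang_of_isIdempotentElem {R : Type*} [CommSemiring R] {t u : R}
    (ht : IsIdempotentElem t) (hu : IsIdempotentElem u) (x y z : R) :
    t * (t * x + u * y) + u * (t * z + u * x)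
      = t * (t * x + u * (t * y + u * z)) + u * x :=
  calc t * (t * x + u * y) + u * (t * z + u * x)
      = t * t * x + t * u * y + t * u * z + u * u * x := by ring
    _ = t * t * x + t * t * u * y + t * (u * u) * z + u * x := by rw [ht.eq, hu.eq]
    _ = t * (t * x + u * (t * y + u * z)) + u * x := by ring

theorem stmt13_general (n : ℕ) (t u : ZMod n)
    (ht2 : t ^ 2 = t) (hu2 : u ^ 2 = u) :
    ∀ x y z : ZMod n,
      t * (t * x + u * y) + u * (t * z + u * x)
        = t * (t * x + u * (t * y + u * z)) + u * x :=
  affine_moufang_of_isIdempotentElem (by rwa [sq] at ht2) (by rwa [sq] at hu2)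

/-- For n ≥ 3 and nonzero t, u in Z_n, if t² ≡ t and u² ≡ u
(mod n) then Z_n(t,u) satisfies the Moufang identity
(x*y)*(z*x) = (x*(y*z))*x. -/
theorem stmt13 (n : ℕ) (hn : 3 ≤ n) (t u : ZMod n) (ht : t ≠ 0) (hu : u ≠ 0)
    (ht2 : t ^ 2 = t) (hu2 : u ^ 2 = u) :
    ∀ x y z : ZMod n,
      t * (t * x + u * y) + u * (t * z + u * x)
        = t * (t * x + u * (t * y + u * z)) + u * x :=
  stmt13_general n t u ht2 hu2
end
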